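/- arXiv:0912.2116 — 5 statements merged into one kernel-verified Lean document; each statement's English description precedes it below -/
import Mathlib

section
/- Every divisor of G_k = 2^(2k+1) + 2^(k+1) + 1 greater than 1 is congruent to 1 modulo 4. -/
/-! Since `G_k = (2^k + 1)^2 + (2^k)^2` is odd, `2^k` is a unit modulo any divisor `d`, so `-1` is
a square modulo `d`. The Jacobi symbol `(-1 | d) = χ₄(d)` then rules out `d ≡ 3 (mod 4)`. -/

theorem Nat.mod_four_eq_one_of_isSquare_neg_one {n : ℕ} (hn : Odd n)
    (h : IsSquare (-1 : ZMod n)) : n % 4 = 1 := by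
  have h3 : n % 4 ≠ 3 := fun h3 ↦ by
    have hJ : jacobiSym (-1) n = -1 := by
      rw [jacobiSym.at_neg_one hn, ZMod.χ₄_nat_three_mod_four h3]
    have hns := ZMod.nonsquare_of_jacobiSym_eq_neg_one hJ
    push_cast at hns
    exact hns h
  have h2 : n % 2 = 1 := Nat.odd_iff.mp hn
  omega

theorem ZMod.isSquare_neg_one_of_dvd_sq_add_sq {n a b : ℕ} (hb : b.Coprime n)
    (h : n ∣ a ^ 2 + b ^ 2) : IsSquare (-1 : ZMod n) := by
  let u := ZMod.unitOfCoprime b hb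
  have hsum : (a : ZMod n) ^ 2 + (u : ZMod n) ^ 2 = 0 := by
    rw [ZMod.coe_unitOfCoprime]
    exact_mod_cast (ZMod.natCast_eq_zero_iff _ n).mpr h
  have hinv : (u : ZMod n) * ↑u⁻¹ = 1 := u.mul_inv
  exact ⟨a * ↑u⁻¹, by
    linear_combination -(↑u⁻¹ : ZMod n) ^ 2 * hsum + (u * ↑u⁻¹ + 1) * hinv⟩

theorem G_divisor_one_mod_four_general (k : ℕ) (d : ℕ)
    (hd : d ∣ 2 ^ (2 * k + 1) + 2 ^ (k + 1) + 1) :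
    d % 4 = 1 := by
  have hG : 2 ^ (2 * k + 1) + 2 ^ (k + 1) + 1 = (2 ^ k + 1) ^ 2 + (2 ^ k) ^ 2 := by ring
  have hodd : Odd d := Odd.of_dvd_nat ⟨2 ^ (2 * k) + 2 ^ k, by ring⟩ hd
  have hcop : (2 ^ k).Coprime d := (Nat.coprime_two_left.mpr hodd).pow_left k
  exact Nat.mod_four_eq_one_of_isSquare_neg_one hodd
    (ZMod.isSquare_neg_one_of_dvd_sq_add_sq hcop (hG ▸ hd))

theorem G_divisor_one_mod_four (k : ℕ) (hk : 0 < k) (d : ℕ)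
    (hd : d ∣ 2 ^ (2 * k + 1) + 2 ^ (k + 1) + 1) (hd1 : 1 < d) :
    d % 4 = 1 :=
  G_divisor_one_mod_four_general k d hd
end

section
/- Suppose G_k is prime. Then 3 is a quadratic non-residue modulo G_k if and only if k is even. -/
/-!
Since `k ≥ 1`, `G k ≡ 1 (mod 4)`, so by quadratic reciprocity `3` is a square modulo `G k` iff
`G k` is a square modulo `3`. As `2 ≡ -1 (mod 3)`, `G k ≡ -1 + (-1)^(k+1) + 1 = (-1)^(k+1)`,
which is a square modulo `3` iff `k` is odd, since `-1` is not a square modulo `3`.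
-/

def G (k : ℕ) : ℕ := 2 ^ (2 * k + 1) + 2 ^ (k + 1) + 1

lemma G_mod_four {k : ℕ} (hk : 0 < k) : G k % 4 = 1 := by
  have h₁ : 4 ∣ 2 ^ (2 * k + 1) := pow_dvd_pow 2 (by omega : 2 ≤ 2 * k + 1)
  have h₂ : 4 ∣ 2 ^ (k + 1) := pow_dvd_pow 2 (by omega : 2 ≤ k + 1)
  unfold G
  omega

lemma natCast_G_zmod_three (k : ℕ) : (G k : ZMod 3) = (-1) ^ (k + 1) := by
  have two_eq_neg_one : (2 : ZMod 3) = -1 := by decide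
  have hodd : Odd (2 * k + 1) := odd_two_mul_add_one k
  simp only [G, Nat.cast_add, Nat.cast_pow, Nat.cast_ofNat, Nat.cast_one, two_eq_neg_one, hodd.neg_one_pow]
  ring

lemma isSquare_neg_one_pow_zmod_three_iff (n : ℕ) : IsSquare ((-1 : ZMod 3) ^ n) ↔ Even n := by
  rcases n.even_or_odd with hn | hn
  · simp [hn, hn.neg_one_pow]
  · simp only [hn.neg_one_pow, Nat.not_even_iff_odd.mpr hn, iff_false]
    decide

lemma isSquare_three_zmod_G_iff {k : ℕ} (hk : 0 < k) (hp : (G k).Prime) :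
    IsSquare (3 : ZMod (G k)) ↔ Odd k := by
  have := Fact.mk hp
  have : Fact (Nat.Prime 3) := ⟨Nat.prime_three⟩
  have reciprocity := ZMod.exists_sq_eq_prime_iff_of_mod_four_eq_one (G_mod_four hk)
    (show 3 ≠ 2 by decide)
  rw [Nat.cast_ofNat, natCast_G_zmod_three, isSquare_neg_one_pow_zmod_three_iff] at reciprocity
  rw [reciprocity, Nat.even_add_one, Nat.not_even_iff_odd]

theorem three_qnr_G (k : ℕ) (hk : 0 < k)
    (hp : Nat.Prime (2 ^ (2 * k + 1) + 2 ^ (k + 1) + 1)) :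
    ¬ IsSquare (3 : ZMod (2 ^ (2 * k + 1) + 2 ^ (k + 1) + 1)) ↔ Even k := by
  exact (isSquare_three_zmod_G_iff hk hp).not.trans Nat.not_odd_iff_even
end

section
/- Suppose G_k is prime and k ≡ 1 (mod 4). Then 5 is a quadratic non-residue modulo G_k. -/
/-!
By quadratic reciprocity (5 ≡ 1 mod 4), 5 is a square modulo an odd prime `p` iff `p` is a
square modulo 5, i.e. iff `p ≡ ±1 (mod 5)`. Since `2 ^ 4 ≡ 1 (mod 5)`, for `k = 4m + 1` we get
`G_k ≡ 2 ^ 3 + 2 ^ 2 + 1 ≡ 3 (mod 5)`.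
-/

theorem ZMod.not_isSquare_five_of_mod_five {p : ℕ} [Fact p.Prime] (hp2 : p ≠ 2)
    (hp5 : p % 5 = 2 ∨ p % 5 = 3) : ¬ IsSquare (5 : ZMod p) := by
  have hrec :=
    @ZMod.exists_sq_eq_prime_iff_of_mod_four_eq_one 5 p ⟨by norm_num⟩ _ (by norm_num) hp2
  rw [Nat.cast_ofNat] at hrec
  rw [← hrec, ← ZMod.natCast_mod]
  rcases hp5 with h | h <;> rw [h] <;> decide

theorem two_pow_add_two_pow_add_one_mod_five {k : ℕ} (hk : k % 4 = 1) :
    (2 ^ (2 * k + 1) + 2 ^ (k + 1) + 1) % 5 = 3 := by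
  obtain ⟨m, rfl⟩ : ∃ m, k = 4 * m + 1 := ⟨k / 4, by omega⟩
  have two_pow_four_mul : ∀ n, 2 ^ (4 * n) % 5 = 1 := fun n => by
    rw [pow_mul, Nat.pow_mod]; norm_num
  rw [show 2 * (4 * m + 1) + 1 = 4 * (2 * m) + 3 by ring,
    show 4 * m + 1 + 1 = 4 * m + 2 by ring, pow_add, pow_add]
  have := two_pow_four_mul (2 * m)
  have := two_pow_four_mul m
  omega

theorem five_qnr_G_general (k : ℕ) (h : k % 4 = 1)
    (hp : Nat.Prime (2 ^ (2 * k + 1) + 2 ^ (k + 1) + 1)) :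
    ¬ IsSquare (5 : ZMod (2 ^ (2 * k + 1) + 2 ^ (k + 1) + 1)) := by
  have := Fact.mk hp
  have hmod := two_pow_add_two_pow_add_one_mod_five h
  exact ZMod.not_isSquare_five_of_mod_five (by omega) (.inr hmod)

theorem five_qnr_G (k : ℕ) (hk : 0 < k) (h : k % 4 = 1)
    (hp : Nat.Prime (2 ^ (2 * k + 1) + 2 ^ (k + 1) + 1)) :
    ¬ IsSquare (5 : ZMod (2 ^ (2 * k + 1) + 2 ^ (k + 1) + 1)) :=
  five_qnr_G_general k h hp
end

section
/- Suppose G_k is prime with k ≥ 1. Then 7 is a quadratic non-residue modulo G_k. -/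
/-!
Since `G_k ≡ 1 (mod 4)`, quadratic reciprocity gives `(7 / G_k) = (G_k / 7)`.
As `2³ ≡ 1 (mod 7)`, `G_k mod 7` depends only on `k mod 3`; it is `5` or `6`,
and neither is a square modulo `7`.
-/

lemma two_pow_add_two_pow_add_one_mod_four (k : ℕ) :
    (2 ^ (2 * k + 1) + 2 ^ (k + 1) + 1) % 4 = 1 := by
  rcases k with _ | k
  · rfl
  · have h₁ : 2 ^ 2 ∣ 2 ^ (2 * (k + 1) + 1) := pow_dvd_pow 2 (by omega)
    have h₂ : 2 ^ 2 ∣ 2 ^ (k + 1 + 1) := pow_dvd_pow 2 (by omega)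
    omega

lemma ZMod.two_pow_eq_two_pow_mod_three (m : ℕ) :
    (2 : ZMod 7) ^ m = 2 ^ (m % 3) := by
  conv_lhs => rw [← Nat.div_add_mod m 3, pow_add, pow_mul]
  rw [show (2 : ZMod 7) ^ 3 = 1 from rfl, one_pow, one_mul]

lemma not_isSquare_two_pow_add_two_pow_add_one_zmod_seven (k : ℕ) :
    ¬ IsSquare ((2 : ZMod 7) ^ (2 * k + 1) + 2 ^ (k + 1) + 1) := by
  have hres : ∀ r < 3, ¬ IsSquare ((2 : ZMod 7) ^ (2 * r + 1) + 2 ^ (r + 1) + 1) := by decide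
  have hk : (2 * k + 1) % 3 = (2 * (k % 3) + 1) % 3 ∧ (k + 1) % 3 = (k % 3 + 1) % 3 := by omega
  rw [ZMod.two_pow_eq_two_pow_mod_three, ZMod.two_pow_eq_two_pow_mod_three (k + 1), hk.1, hk.2,
    ← ZMod.two_pow_eq_two_pow_mod_three, ← ZMod.two_pow_eq_two_pow_mod_three]
  exact hres _ (Nat.mod_lt k (by norm_num))

theorem seven_qnr_G_general (k : ℕ)
    (hp : Nat.Prime (2 ^ (2 * k + 1) + 2 ^ (k + 1) + 1)) :
    ¬ IsSquare (7 : ZMod (2 ^ (2 * k + 1) + 2 ^ (k + 1) + 1)) := by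
  have := Fact.mk hp
  have : Fact (Nat.Prime 7) := ⟨by norm_num⟩
  have hrec : IsSquare ((7 : ℕ) : ZMod (2 ^ (2 * k + 1) + 2 ^ (k + 1) + 1)) ↔
      IsSquare ((2 ^ (2 * k + 1) + 2 ^ (k + 1) + 1 : ℕ) : ZMod 7) :=
    ZMod.exists_sq_eq_prime_iff_of_mod_four_eq_one (two_pow_add_two_pow_add_one_mod_four k)
      (by norm_num)
  push_cast at hrec
  rw [hrec]
  exact not_isSquare_two_pow_add_two_pow_add_one_zmod_seven k

theorem seven_qnr_G (k : ℕ) (hk : 1 ≤ k)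
    (hp : Nat.Prime (2 ^ (2 * k + 1) + 2 ^ (k + 1) + 1)) :
    ¬ IsSquare (7 : ZMod (2 ^ (2 * k + 1) + 2 ^ (k + 1) + 1)) :=
  seven_qnr_G_general k hp
end

section
/- Suppose H_k is prime and k ≡ 3 (mod 4). Then 5 is a quadratic non-residue modulo H_k. -/
/-! Since 5 ≡ 1 (mod 4), quadratic reciprocity makes 5 a square modulo an odd prime p exactly when p
is a square modulo 5, i.e. p ≡ 0, ±1 (mod 5). As 2⁴ ≡ 1 (mod 5), for k ≡ 3 (mod 4) one gets
H_k ≡ 2³ - 1 + 1 ≡ 3 (mod 5). -/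

namespace ZMod

lemma isSquare_natCast_iff_mod_five (n : ℕ) :
    IsSquare (n : ZMod 5) ↔ n % 5 = 0 ∨ n % 5 = 1 ∨ n % 5 = 4 := by
  rw [← ZMod.natCast_mod n 5]
  have hlt : n % 5 < 5 := Nat.mod_lt n (by norm_num)
  generalize n % 5 = r at hlt ⊢
  interval_cases r <;> decide

theorem exists_sq_eq_five_iff {p : ℕ} [Fact p.Prime] (hp : p ≠ 2) :
    IsSquare (5 : ZMod p) ↔ p % 5 = 0 ∨ p % 5 = 1 ∨ p % 5 = 4 := by
  have : Fact (Nat.Prime 5) := ⟨by norm_num⟩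
  rw [← isSquare_natCast_iff_mod_five]
  exact_mod_cast (exists_sq_eq_prime_iff_of_mod_four_eq_one (p := 5) (by norm_num) hp).symm

end ZMod

lemma two_pow_sub_two_pow_add_one_mod_five {k : ℕ} (hk : k % 4 = 3) :
    (2 ^ (2 * k + 1) - 2 ^ (k + 1) + 1) % 5 = 3 := by
  obtain ⟨m, rfl⟩ : ∃ m, k = 4 * m + 3 := ⟨k / 4, by omega⟩
  have hhigh : 2 ^ (2 * (4 * m + 3) + 1) = 8 * 16 ^ (2 * m + 1) := by
    rw [show 2 * (4 * m + 3) + 1 = 3 + 4 * (2 * m + 1) by ring, pow_add, pow_mul]; norm_num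
  have hlow : 2 ^ (4 * m + 3 + 1) = 16 ^ (m + 1) := by
    rw [show 4 * m + 3 + 1 = 4 * (m + 1) by ring, pow_mul]; norm_num
  have h16 : ∀ j, 16 ^ j % 5 = 1 := fun j => by rw [Nat.pow_mod]; norm_num
  have h16high := h16 (2 * m + 1)
  have h16low := h16 (m + 1)
  have hle : 16 ^ (m + 1) ≤ 16 ^ (2 * m + 1) := Nat.pow_le_pow_right (by norm_num) (by omega)
  rw [hhigh, hlow]
  omega

theorem five_qnr_H_general (k : ℕ) (h : k % 4 = 3)
    (hp : Nat.Prime (2 ^ (2 * k + 1) - 2 ^ (k + 1) + 1)) :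
    ¬ IsSquare (5 : ZMod (2 ^ (2 * k + 1) - 2 ^ (k + 1) + 1)) := by
  have hmod := two_pow_sub_two_pow_add_one_mod_five h
  have : Fact (Nat.Prime _) := ⟨hp⟩
  rw [ZMod.exists_sq_eq_five_iff (by omega)]
  omega

theorem five_qnr_H (k : ℕ) (hk : 0 < k) (h : k % 4 = 3)
    (hp : Nat.Prime (2 ^ (2 * k + 1) - 2 ^ (k + 1) + 1)) :
    ¬ IsSquare (5 : ZMod (2 ^ (2 * k + 1) - 2 ^ (k + 1) + 1)) :=
  five_qnr_H_general k h hp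
end
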